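/- arXiv:1106.4126 — 6 statements merged into one kernel-verified Lean document; each statement's English description precedes it below -/
import Mathlib

section
/- Let n ≥ 1, let P be a complex polynomial of degree at most n, and let δ be a complex number with P'(δ) ≠ 0. Then for any complex number ω, the polynomial P(z) − ω has a zero λ in the closed disk whose diameter is the line segment [δ, δ − n·(P(δ) − ω)/P'(δ)]; that is, there exists λ with P(λ) = ω and |λ − (δ − n(P(δ)−ω)/(2P'(δ)))| ≤ n·|P(δ) − ω| / (2|P'(δ)|). -/
/-!
Put `f = P - ω` and `s = f'(δ) / f(δ)`. The logarithmic derivative gives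
`∑ 1 / (s (δ - z)) = 1` over the at most `n` roots `z` of `f`, so some root has
`Re (1 / (s (δ - z))) ≥ 1 / n`. Inversion maps the half-plane `Re (d / w) ≥ 1` into the closed
disk with diameter `[0, d]`; for `w = z - δ` and `d = -n / s` this is the disk of the statement.
-/

open Polynomial

theorem Multiset.exists_mem_sum_map_le_card_nsmul {α R : Type*} [AddCommMonoid R] [LinearOrder R]
    [IsOrderedAddMonoid R] {s : Multiset α} (hs : s ≠ 0) (f : α → R) :
    ∃ a ∈ s, (s.map f).sum ≤ card s • f a := by
  obtain ⟨a, ha, hmax⟩ := s.exists_max_image f hs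
  refine ⟨a, ha, ?_⟩
  simpa using (s.map f).sum_le_card_nsmul (f a) (by simpa using hmax)

theorem Complex.norm_sub_half_le_of_one_le_re_div {w d : ℂ} (h : 1 ≤ (d / w).re) :
    ‖w - d / 2‖ ≤ ‖d‖ / 2 := by
  have hw : w ≠ 0 := by rintro rfl; norm_num at h
  rw [div_re, ← add_div, le_div_iff₀ (normSq_pos.mpr hw)] at h
  rw [← sq_le_sq₀ (norm_nonneg _) (by positivity), div_pow, Complex.sq_norm, Complex.sq_norm]
  simp only [normSq_apply, sub_re, sub_im, div_ofNat_re, div_ofNat_im] at h ⊢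
  nlinarith

theorem Polynomial.exists_mem_roots_one_le_mul_re (f : ℂ[X]) {n : ℕ} (hn : f.natDegree ≤ n)
    {x : ℂ} (hx : f.eval x ≠ 0) (hx' : f.derivative.eval x ≠ 0) :
    ∃ z ∈ f.roots, 1 ≤ n * (f.eval x / (f.derivative.eval x * (x - z))).re := by
  set g : ℂ → ℂ := fun z ↦ f.eval x / (f.derivative.eval x * (x - z))
  have hsum : (f.roots.map g).sum = 1 := by
    have hg : g = fun z ↦ f.eval x / f.derivative.eval x * (1 / (x - z)) := by
      funext z; rw [mul_one_div, div_div]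
    rw [hg, Multiset.sum_map_mul_left,
      ← (IsAlgClosed.splits f).eval_derivative_div_eval_of_ne_zero hx]
    field_simp
  have hre : (f.roots.map fun z ↦ (g z).re).sum = 1 := by
    change (f.roots.map (Complex.reAddGroupHom ∘ g)).sum = 1
    rw [← Multiset.map_map, ← map_multiset_sum, hsum, Complex.coe_reAddGroupHom, Complex.one_re]
  have hne : f.roots ≠ 0 := by rintro h; simp [h] at hsum
  obtain ⟨z, hz, hle⟩ := Multiset.exists_mem_sum_map_le_card_nsmul hne fun z ↦ (g z).re
  refine ⟨z, hz, ?_⟩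
  rw [hre, nsmul_eq_mul] at hle
  have hcard : (Multiset.card f.roots : ℝ) ≤ n := by exact_mod_cast (card_roots' f).trans hn
  have hpos : 0 < (g z).re := pos_of_mul_pos_right (hle.trans_lt' one_pos) (by positivity)
  exact hle.trans (mul_le_mul_of_nonneg_right hcard hpos.le)

theorem Polynomial.exists_isRoot_norm_sub_le (f : ℂ[X]) {n : ℕ} (hn : f.natDegree ≤ n) {x : ℂ}
    (hx' : f.derivative.eval x ≠ 0) :
    ∃ z, f.IsRoot z ∧ ‖z - (x - n * f.eval x / (2 * f.derivative.eval x))‖ ≤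
      n * ‖f.eval x‖ / (2 * ‖f.derivative.eval x‖) := by
  by_cases hx : f.eval x = 0
  · exact ⟨x, hx, by simp [hx]⟩
  obtain ⟨z, hz, hle⟩ := f.exists_mem_roots_one_le_mul_re hn hx hx'
  refine ⟨z, isRoot_of_mem_roots hz, ?_⟩
  set d : ℂ := -(n * f.eval x / f.derivative.eval x)
  have hre : (d / (z - x)).re = n * (f.eval x / (f.derivative.eval x * (x - z))).re := by
    rw [← neg_sub x z, neg_div_neg_eq, div_div, mul_div_assoc, Complex.mul_re,
      Complex.natCast_re, Complex.natCast_im, zero_mul, sub_zero]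
  have hdisk := Complex.norm_sub_half_le_of_one_le_re_div (w := z - x) (d := d) (hre ▸ hle)
  convert hdisk using 1
  · congr 1; ring
  · simp only [d, norm_neg, norm_div, norm_mul, Complex.norm_natCast]; ring

theorem zero_in_disk_of_diameter_general (n : ℕ) (P : Polynomial ℂ)
    (hP : P.natDegree ≤ n) (δ : ℂ) (hδ : (Polynomial.derivative P).eval δ ≠ 0) (ω : ℂ) :
    ∃ lam : ℂ, P.eval lam = ω ∧
      ‖lam - (δ - (n : ℂ) * (P.eval δ - ω) / (2 * (Polynomial.derivative P).eval δ))‖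
        ≤ (n : ℝ) * ‖P.eval δ - ω‖ /
            (2 * ‖(Polynomial.derivative P).eval δ‖) := by
  have hderiv : derivative (P - C ω) = derivative P := by simp
  obtain ⟨lam, hroot, hle⟩ :=
    (P - C ω).exists_isRoot_norm_sub_le (natDegree_sub_C.trans_le hP) (x := δ) (hderiv ▸ hδ)
  refine ⟨lam, by simpa [sub_eq_zero] using hroot, ?_⟩
  simpa [hderiv] using hle

theorem zero_in_disk_of_diameter (n : ℕ) (hn : 1 ≤ n) (P : Polynomial ℂ)
    (hP : P.natDegree ≤ n) (δ : ℂ) (hδ : (Polynomial.derivative P).eval δ ≠ 0) (ω : ℂ) :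
    ∃ lam : ℂ, P.eval lam = ω ∧
      ‖lam - (δ - (n : ℂ) * (P.eval δ - ω) / (2 * (Polynomial.derivative P).eval δ))‖
        ≤ (n : ℝ) * ‖P.eval δ - ω‖ /
            (2 * ‖(Polynomial.derivative P).eval δ‖) :=
  zero_in_disk_of_diameter_general n P hP δ hδ ω
end

section
/- Let δ be a real number with 0 < δ < 1 and let a_1, ..., a_n be complex numbers in the closed unit disk. Set s = (1/n)·Re(Σ_{k=1}^n a_k). Then ∏_{k=1}^n |δ − a_k| ≤ (1 + δ² − 2δs)^{n/2}. -/
open Finset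

/-!
Since `|a| ≤ 1`, each factor satisfies `|δ - a|² ≤ 1 + δ² - 2δ·Re a`, and the right-hand sides
average to `1 + δ² - 2δs`; AM-GM bounds their product by the `n`-th power of that average, and
taking square roots gives the claim.
-/

theorem Complex.norm_ofReal_sub_sq_le {z : ℂ} (hz : ‖z‖ ≤ 1) (δ : ℝ) :
    ‖(δ : ℂ) - z‖ ^ 2 ≤ 1 + δ ^ 2 - 2 * δ * z.re := by
  have hz2 : z.re * z.re + z.im * z.im ≤ 1 := by
    rw [← Complex.normSq_apply, ← Complex.sq_norm]
    nlinarith [norm_nonneg z]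
  rw [Complex.sq_norm, Complex.normSq_apply]
  simp only [Complex.sub_re, Complex.ofReal_re, Complex.sub_im, Complex.ofReal_im]
  nlinarith

theorem Finset.prod_le_pow_card_of_sum_le {ι : Type*} (s : Finset ι) {f : ι → ℝ} {M : ℝ}
    (hf : ∀ i ∈ s, 0 ≤ f i) (hM : ∑ i ∈ s, f i ≤ #s * M) :
    ∏ i ∈ s, f i ≤ M ^ #s := by
  rcases s.eq_empty_or_nonempty with rfl | hs
  · simp
  have hcard : (0 : ℝ) < #s := by exact_mod_cast hs.card_pos
  have amgm := Real.geom_mean_le_arith_mean s (fun _ ↦ 1) f (fun _ _ ↦ zero_le_one)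
    (by simpa using hcard) hf
  simp only [Real.rpow_one, one_mul, sum_const, nsmul_eq_mul, mul_one] at amgm
  have hmean : (∏ i ∈ s, f i) ^ ((#s : ℝ)⁻¹) ≤ M := amgm.trans (by rwa [div_le_iff₀' hcard])
  calc ∏ i ∈ s, f i = ((∏ i ∈ s, f i) ^ ((#s : ℝ)⁻¹)) ^ #s :=
        (Real.rpow_inv_natCast_pow (prod_nonneg hf) hs.card_pos.ne').symm
    _ ≤ M ^ #s := pow_le_pow_left₀ (Real.rpow_nonneg (prod_nonneg hf) _) hmean _

theorem Finset.prod_le_rpow_card_div_two_of_sq_le {ι : Type*} (s : Finset ι) {x z : ι → ℝ}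
    {M : ℝ} (hx : ∀ i ∈ s, 0 ≤ x i) (hxz : ∀ i ∈ s, x i ^ 2 ≤ z i)
    (hM : ∑ i ∈ s, z i ≤ #s * M) :
    ∏ i ∈ s, x i ≤ M ^ ((#s : ℝ) / 2) := by
  rcases s.eq_empty_or_nonempty with rfl | hs
  · simp
  have hz : ∀ i ∈ s, 0 ≤ z i := fun i hi ↦ (sq_nonneg _).trans (hxz i hi)
  have hM0 : 0 ≤ M := nonneg_of_mul_nonneg_right ((sum_nonneg hz).trans hM)
    (by exact_mod_cast hs.card_pos)
  calc ∏ i ∈ s, x i = √(∏ i ∈ s, x i ^ 2) := by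
        rw [prod_pow, Real.sqrt_sq (prod_nonneg hx)]
    _ ≤ √(M ^ #s) := Real.sqrt_le_sqrt <|
        (prod_le_prod (fun _ _ ↦ sq_nonneg _) hxz).trans (s.prod_le_pow_card_of_sum_le hz hM)
    _ = M ^ ((#s : ℝ) / 2) := by
        rw [Real.sqrt_eq_rpow, ← Real.rpow_natCast, ← Real.rpow_mul hM0, mul_one_div]

theorem prod_abs_le_of_mem_unit_disk_general (n : ℕ) (hn : 1 ≤ n) (δ : ℝ)
    (a : Fin n → ℂ) (ha : ∀ k, ‖a k‖ ≤ 1) :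
    ∏ k, ‖(δ : ℂ) - a k‖ ≤
      (1 + δ ^ 2 - 2 * δ * ((1 / (n : ℝ)) * (∑ k, a k).re)) ^ ((n : ℝ) / 2) := by
  have hn0 : (n : ℝ) ≠ 0 := by exact_mod_cast Nat.one_le_iff_ne_zero.mp hn
  have hsum : ∑ k, (1 + δ ^ 2 - 2 * δ * (a k).re) =
      n * (1 + δ ^ 2 - 2 * δ * ((1 / (n : ℝ)) * (∑ k, a k).re)) := by
    simp only [sum_sub_distrib, sum_const, card_univ, Fintype.card_fin, nsmul_eq_mul,
      ← mul_sum, Complex.re_sum]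
    field_simp
  have h := univ.prod_le_rpow_card_div_two_of_sq_le (fun k _ ↦ norm_nonneg _)
    (fun k _ ↦ Complex.norm_ofReal_sub_sq_le (ha k) δ)
    (by rw [card_univ, Fintype.card_fin]; exact hsum.le)
  rwa [card_univ, Fintype.card_fin] at h

theorem prod_abs_le_of_mem_unit_disk (n : ℕ) (hn : 1 ≤ n) (δ : ℝ) (hδ0 : 0 < δ) (hδ1 : δ < 1)
    (a : Fin n → ℂ) (ha : ∀ k, ‖a k‖ ≤ 1) :
    ∏ k, ‖(δ : ℂ) - a k‖ ≤
      (1 + δ ^ 2 - 2 * δ * ((1 / (n : ℝ)) * (∑ k, a k).re)) ^ ((n : ℝ) / 2) :=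
  prod_abs_le_of_mem_unit_disk_general n hn δ a ha
end

section
/- Let δ and a be real numbers with 0 < δ < a < 1, and let b_1, ..., b_{n−1} be complex numbers satisfying |b_k| ≤ 1 and |b_k − a| ≥ 1 for all k. Set s = (1/(n−1))·Re(Σ_{k=1}^{n−1} b_k) and q = (a/2 − s)/(1 + a/2). Then ∏_{k=1}^{n−1} |(δ − b_k)/(a − b_k)| ≤ A^{n−1}, where A = ((1+δ)/(1+a))^q · (1 + δ² − δa)^{(1−q)/2}. -/
/-!
Write `x = Re b` for one factor. From `|b| ≤ 1 ≤ |b - a|` we get `-1 ≤ x ≤ a / 2`, and since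
`|b|² ≤ 1` the squared factor is at most `(1 + δ² - 2δx) / (1 + a² - 2ax)`. In the weight
`w = (a/2 - x) / (1 + a/2) ∈ [0, 1]` this is a quotient of two convex combinations, interpolating
between `P = ((1 + δ)/(1 + a))²` (at `w = 1`) and `Q = 1 + δ² - δa` (at `w = 0`). Because the
numerator increases from `Q` to `(1 + δ)²`, the quotient lies below the weighted harmonic mean of
`P` and `Q`, hence below the geometric mean `P^w Q^(1-w)`. The exponent `w` is affine in `x`, so
the product of these bounds over `k` depends only on the mean `s` of the `Re b_k`, and equals
`A^(2(n-1))`.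
-/

open Finset

lemma inv_add_div_le_rpow_mul_rpow {p₀ p₁ w : ℝ} (hp₀ : 0 < p₀) (hp₁ : 0 < p₁)
    (hw₀ : 0 ≤ w) (hw₁ : w ≤ 1) :
    (w / p₀ + (1 - w) / p₁)⁻¹ ≤ p₀ ^ w * p₁ ^ (1 - w) := by
  have hgm := Real.geom_mean_le_arith_mean2_weighted hw₀ (sub_nonneg.2 hw₁)
    (inv_nonneg.2 hp₀.le) (inv_nonneg.2 hp₁.le) (add_sub_cancel w 1)
  rw [Real.inv_rpow hp₀.le, Real.inv_rpow hp₁.le, ← mul_inv] at hgm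
  exact inv_le_of_inv_le₀ (by positivity) (by simpa only [div_eq_mul_inv] using hgm)

lemma convex_comb_div_le_inv_add_div {x₀ x₁ y₀ y₁ w : ℝ} (hx₁ : 0 < x₁) (hy₀ : 0 < y₀)
    (hy₁ : 0 < y₁) (hx : x₁ ≤ x₀) (hxy : x₀ / y₀ ≤ x₁ / y₁) (hw₀ : 0 ≤ w) (hw₁ : w ≤ 1) :
    (w * x₀ + (1 - w) * x₁) / (w * y₀ + (1 - w) * y₁) ≤
      (w / (x₀ / y₀) + (1 - w) / (x₁ / y₁))⁻¹ := by
  have hx₀ : 0 < x₀ := hx₁.trans_le hx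
  set t₀ := y₀ / x₀ with ht₀
  set t₁ := y₁ / x₁ with ht₁
  have hy₀t : y₀ = t₀ * x₀ := by rw [ht₀, div_mul_cancel₀ _ hx₀.ne']
  have hy₁t : y₁ = t₁ * x₁ := by rw [ht₁, div_mul_cancel₀ _ hx₁.ne']
  have ht : t₁ ≤ t₀ := by
    rw [div_le_div_iff₀ hy₀ hy₁] at hxy
    rw [ht₀, ht₁, div_le_div_iff₀ hx₁ hx₀]; linarith
  have hD : 0 < w * y₀ + (1 - w) * y₁ :=
    convex_Ioi (0 : ℝ) hy₀ hy₁ hw₀ (sub_nonneg.2 hw₁) (add_sub_cancel w 1)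
  have hT : 0 < w * t₀ + (1 - w) * t₁ :=
    convex_Ioi (0 : ℝ) (div_pos hy₀ hx₀) (div_pos hy₁ hx₁) hw₀ (sub_nonneg.2 hw₁)
      (add_sub_cancel w 1)
  rw [div_div_eq_mul_div, div_div_eq_mul_div, mul_div_assoc, mul_div_assoc, ← ht₀, ← ht₁,
    ← one_div, div_le_div_iff₀ hD hT, hy₀t, hy₁t]
  -- the gap is `w (1 - w) (x₀ - x₁) (t₀ - t₁) ≥ 0`
  nlinarith [mul_nonneg (mul_nonneg hw₀ (sub_nonneg.2 hw₁))
    (mul_nonneg (sub_nonneg.2 hx) (sub_nonneg.2 ht))]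

lemma convex_comb_div_le_rpow_mul_rpow {x₀ x₁ y₀ y₁ w : ℝ} (hx₁ : 0 < x₁) (hy₀ : 0 < y₀)
    (hy₁ : 0 < y₁) (hx : x₁ ≤ x₀) (hxy : x₀ / y₀ ≤ x₁ / y₁) (hw₀ : 0 ≤ w) (hw₁ : w ≤ 1) :
    (w * x₀ + (1 - w) * x₁) / (w * y₀ + (1 - w) * y₁) ≤
      (x₀ / y₀) ^ w * (x₁ / y₁) ^ (1 - w) :=
  (convex_comb_div_le_inv_add_div hx₁ hy₀ hy₁ hx hxy hw₀ hw₁).trans <|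
    inv_add_div_le_rpow_mul_rpow (div_pos (hx₁.trans_le hx) hy₀) (div_pos hx₁ hy₁) hw₀ hw₁

lemma prod_rpow_mul_rpow {ι : Type*} (s : Finset ι) {x y : ℝ} (hx : 0 < x) (hy : 0 < y)
    {u v : ι → ℝ} {t t' : ℝ} (hu : ∑ k ∈ s, u k = #s * t) (hv : ∑ k ∈ s, v k = #s * t') :
    ∏ k ∈ s, x ^ u k * y ^ v k = (x ^ t * y ^ t') ^ #s := by
  rw [prod_mul_distrib, ← Real.rpow_sum_of_pos hx, ← Real.rpow_sum_of_pos hy, hu, hv, mul_pow,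
    mul_comm _ t, mul_comm _ t', Real.rpow_mul_natCast hx.le, Real.rpow_mul_natCast hy.le]

lemma Complex.sq_norm_ofReal_sub (c : ℝ) (z : ℂ) :
    ‖(c : ℂ) - z‖ ^ 2 = ‖z‖ ^ 2 - 2 * c * z.re + c ^ 2 := by
  simp only [Complex.sq_norm, Complex.normSq_apply, Complex.sub_re, Complex.sub_im,
    Complex.ofReal_re, Complex.ofReal_im]
  ring

lemma Complex.re_le_half_of_norm_le_le_norm_sub {z : ℂ} {a : ℝ} (ha : 0 < a) (hz : ‖z‖ ≤ 1)
    (hza : 1 ≤ ‖z - a‖) : z.re ≤ a / 2 := by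
  have h := Complex.sq_norm_ofReal_sub a z
  rw [norm_sub_rev] at h
  nlinarith [norm_nonneg z]

lemma Complex.norm_sub_div_sub_sq_le {z : ℂ} {δ a : ℝ} (hδ : 0 ≤ δ) (hδa : δ ≤ a)
    (hz : ‖z‖ ≤ 1) (hx : z.re ≤ a / 2) (hza : z ≠ a) :
    ‖(δ - z) / (a - z)‖ ^ 2 ≤ (1 + δ ^ 2 - 2 * δ * z.re) / (1 + a ^ 2 - 2 * a * z.re) := by
  have hpos : 0 < ‖(a : ℂ) - z‖ ^ 2 := pow_pos (norm_pos_iff.2 (sub_ne_zero.2 hza.symm)) 2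
  rw [Complex.sq_norm_ofReal_sub] at hpos
  rw [norm_div, div_pow, Complex.sq_norm_ofReal_sub, Complex.sq_norm_ofReal_sub]
  have hz2 : ‖z‖ ^ 2 ≤ 1 := pow_le_one₀ (norm_nonneg z) hz
  rw [div_le_div_iff₀ hpos (by linarith)]
  -- the gap is `(1 - ‖z‖²) (a - δ) (a + δ - 2 re z) ≥ 0`
  nlinarith [mul_nonneg (mul_nonneg (sub_nonneg.2 hz2) (sub_nonneg.2 hδa))
    (by linarith : 0 ≤ a + δ - 2 * z.re)]

lemma Complex.norm_sub_div_sub_sq_le_rpow {z : ℂ} {δ a : ℝ} (hδ : 0 < δ) (hδa : δ < a)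
    (ha : a < 1) (hz : ‖z‖ ≤ 1) (hza : 1 ≤ ‖z - a‖) :
    ‖(δ - z) / (a - z)‖ ^ 2 ≤ ((1 + δ) ^ 2 / (1 + a) ^ 2) ^ ((a / 2 - z.re) / (1 + a / 2)) *
      (1 + δ ^ 2 - δ * a) ^ (1 - (a / 2 - z.re) / (1 + a / 2)) := by
  have ha₀ : 0 < a := hδ.trans hδa
  have hx : z.re ≤ a / 2 := Complex.re_le_half_of_norm_le_le_norm_sub ha₀ hz hza
  have hx' : -1 ≤ z.re := by linarith [(abs_le.1 z.abs_re_le_norm).1]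
  set w := (a / 2 - z.re) / (1 + a / 2) with hw
  have hw₀ : 0 ≤ w := div_nonneg (by linarith) (by linarith)
  have hw₁ : w ≤ 1 := by rw [hw, div_le_one (by linarith)]; linarith
  have hre : z.re = a / 2 - (1 + a / 2) * w := by
    rw [hw, mul_div_cancel₀ _ (by positivity)]; ring
  have hQ : 0 < 1 + δ ^ 2 - δ * a := by nlinarith
  -- `(1 + δ)² / (1 + a)²` and `1 + δ² - δ a` are the values of the quotient at `re z = -1, a / 2`
  have hQ_le : 1 + δ ^ 2 - δ * a ≤ (1 + δ) ^ 2 := by nlinarith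
  have hP_le : (1 + δ) ^ 2 / (1 + a) ^ 2 ≤ (1 + δ ^ 2 - δ * a) / 1 := by
    rw [div_le_div_iff₀ (by positivity) one_pos]
    nlinarith [mul_nonneg (mul_nonneg (sub_nonneg.2 hδa.le) (by linarith : (0 : ℝ) ≤ 2 + a))
      (by nlinarith : 0 ≤ 1 - δ * a)]
  calc ‖(δ - z) / (a - z)‖ ^ 2
      ≤ (1 + δ ^ 2 - 2 * δ * z.re) / (1 + a ^ 2 - 2 * a * z.re) :=
        Complex.norm_sub_div_sub_sq_le hδ.le hδa.le hz hx (by rintro rfl; norm_num at hza)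
    _ = (w * (1 + δ) ^ 2 + (1 - w) * (1 + δ ^ 2 - δ * a)) /
        (w * (1 + a) ^ 2 + (1 - w) * 1) := by rw [hre]; ring_nf
    _ ≤ ((1 + δ) ^ 2 / (1 + a) ^ 2) ^ w * ((1 + δ ^ 2 - δ * a) / 1) ^ (1 - w) :=
      convex_comb_div_le_rpow_mul_rpow hQ (by positivity) one_pos hQ_le hP_le hw₀ hw₁
    _ = _ := by rw [div_one]

lemma Complex.norm_sub_div_sub_le_rpow {z : ℂ} {δ a : ℝ} (hδ : 0 < δ) (hδa : δ < a)
    (ha : a < 1) (hz : ‖z‖ ≤ 1) (hza : 1 ≤ ‖z - a‖) :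
    ‖(δ - z) / (a - z)‖ ≤ ((1 + δ) / (1 + a)) ^ ((a / 2 - z.re) / (1 + a / 2)) *
      (1 + δ ^ 2 - δ * a) ^ ((1 - (a / 2 - z.re) / (1 + a / 2)) / 2) := by
  have ha₀ : 0 < a := hδ.trans hδa
  have hr : 0 ≤ (1 + δ) / (1 + a) := by positivity
  have hQ : 0 ≤ 1 + δ ^ 2 - δ * a := by nlinarith
  refine (pow_le_pow_iff_left₀ (norm_nonneg _) (by positivity) two_ne_zero).1 ?_
  rw [mul_pow, ← Real.rpow_mul_natCast hr, ← Real.rpow_mul_natCast hQ, mul_comm _ ((2 : ℕ) : ℝ),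
    Real.rpow_natCast_mul hr, div_pow, Nat.cast_ofNat, div_mul_cancel₀ _ two_ne_zero]
  exact Complex.norm_sub_div_sub_sq_le_rpow hδ hδa ha hz hza

theorem prod_abs_quotient_le (n : ℕ) (hn : 2 ≤ n) (δ a : ℝ)
    (hδ0 : 0 < δ) (hδa : δ < a) (ha1 : a < 1)
    (b : Fin (n - 1) → ℂ) (hb1 : ∀ k, ‖b k‖ ≤ 1)
    (hb2 : ∀ k, 1 ≤ ‖b k - (a : ℂ)‖)
    (s q A : ℝ)
    (hs : s = (1 / ((n : ℝ) - 1)) * (∑ k, b k).re)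
    (hq : q = (a / 2 - s) / (1 + a / 2))
    (hA : A = ((1 + δ) / (1 + a)) ^ q * (1 + δ ^ 2 - δ * a) ^ ((1 - q) / 2)) :
    ∏ k, ‖((δ : ℂ) - b k) / ((a : ℂ) - b k)‖ ≤ A ^ (n - 1) := by
  have ha₀ : 0 < a := hδ0.trans hδa
  have hcard : (#(univ : Finset (Fin (n - 1))) : ℝ) = n - 1 := by
    rw [card_univ, Fintype.card_fin, Nat.cast_sub (by omega), Nat.cast_one]
  set w : Fin (n - 1) → ℝ := fun k => (a / 2 - (b k).re) / (1 + a / 2)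
  have hw : ∑ k, w k = #(univ : Finset (Fin (n - 1))) * q := by
    have hn₁ : (n : ℝ) - 1 ≠ 0 := by
      have : (2 : ℝ) ≤ n := by exact_mod_cast hn
      linarith
    rw [← sum_div, sum_sub_distrib, sum_const, nsmul_eq_mul, ← Complex.re_sum, hcard, hq, hs]
    field_simp
  have hw' : ∑ k, (1 - w k) / 2 = #(univ : Finset (Fin (n - 1))) * ((1 - q) / 2) := by
    rw [← sum_div, sum_sub_distrib, sum_const, nsmul_eq_mul, mul_one, hw]
    ring
  calc ∏ k, ‖((δ : ℂ) - b k) / ((a : ℂ) - b k)‖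
      ≤ ∏ k, ((1 + δ) / (1 + a)) ^ w k * (1 + δ ^ 2 - δ * a) ^ ((1 - w k) / 2) :=
        prod_le_prod (fun _ _ => norm_nonneg _) fun k _ =>
          Complex.norm_sub_div_sub_le_rpow hδ0 hδa ha1 (hb1 k) (hb2 k)
    _ = A ^ (n - 1) := by
      rw [prod_rpow_mul_rpow univ (by positivity) (by nlinarith) hw hw', hA, card_univ,
        Fintype.card_fin]
end

section
/- Let a ∈ (0,1) and let b_1, ..., b_{n−1} be complex numbers satisfying |b_k| ≤ 1 and |b_k − a| ≥ 1 for all k; set s = (1/(n−1))·Re(Σ_{k=1}^{n−1} b_k), p = (a/2 − s)/(1 − a/2) and q = (a/2 − s)/(1 + a/2). Then for every real b > 1 one has ∏_{k=1}^{n−1} |b − b_k| ≥ min(B_1, B_2)^{n−1}, where B_1 = (1 + b − a)^p · (1 + b² − ba)^{(1−p)/2} and B_2 = (1 + b)^q · (1 + b² − ba)^{(1−q)/2}. -/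
/-!
Write `x = Re z` and `t = b'`. On the region `‖z‖ ≤ 1 ≤ ‖z - a‖` one has `-1 ≤ x ≤ a / 2`, and
`log ‖t - z‖` dominates both `log (t - x)` and `log (1 + t² - a² - 2 (t - a) x) / 2`. Both are
concave in `x`, so an affine function of `x` lying below the values `log (1 + t)`,
`log (1 + t - a)`, `log (1 + t² - t a) / 2` at the nodes `x = -1, a - 1, a / 2` lies below
`log ‖t - z‖` on the whole region (use the first bound on `[-1, a - 1]`, the second on
`[a - 1, a / 2]`). One of the chords through the nodes `a - 1, a / 2` or `-1, a / 2` lies below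
all three values, and at the mean `s` these chords take the values `log B₁` and `log B₂`.
Summing the affine bound over `k` gives the claim.
-/

open Finset Real Set

lemma Complex.sq_norm_sub_ofReal (z : ℂ) (r : ℝ) :
    ‖z - r‖ ^ 2 = ‖z‖ ^ 2 - 2 * r * z.re + r ^ 2 := by
  simp only [Complex.sq_norm, Complex.normSq_sub, Complex.normSq_ofReal, Complex.conj_ofReal,
    Complex.re_mul_ofReal]
  ring

lemma Complex.re_le_half_of_norm_le_one_le_norm_sub {a : ℝ} (ha : 0 < a) {z : ℂ} (h₁ : ‖z‖ ≤ 1)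
    (h₂ : 1 ≤ ‖z - a‖) : z.re ≤ a / 2 := by
  have := Complex.sq_norm_sub_ofReal z a
  nlinarith [norm_nonneg z]

lemma Complex.le_sq_norm_ofReal_sub {a t : ℝ} {z : ℂ} (h : 1 ≤ ‖z - a‖) :
    1 + t ^ 2 - a ^ 2 - 2 * (t - a) * z.re ≤ ‖(t : ℂ) - z‖ ^ 2 := by
  rw [norm_sub_rev, Complex.sq_norm_sub_ofReal]
  nlinarith [Complex.sq_norm_sub_ofReal z a]

lemma Complex.norm_ofReal_sub_pos {t : ℝ} {z : ℂ} (h : ‖z‖ < t) : 0 < ‖(t : ℂ) - z‖ := by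
  have := norm_sub_norm_le (t : ℂ) z
  rw [Complex.norm_real, Real.norm_of_nonneg ((norm_nonneg z).trans h.le)] at this
  linarith

lemma log_rpow_mul_rpow {x y : ℝ} (hx : 0 < x) (hy : 0 < y) (u v : ℝ) :
    log (x ^ u * y ^ v) = u * log x + v * log y := by
  rw [log_mul (by positivity) (by positivity), log_rpow hx, log_rpow hy]

lemma affine_le_log_affine {u v c d α β x : ℝ} (hpos : ∀ y ∈ Icc u v, 0 < c + d * y)
    (hu : α + β * u ≤ log (c + d * u)) (hv : α + β * v ≤ log (c + d * v)) (hx : x ∈ Icc u v) :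
    α + β * x ≤ log (c + d * x) := by
  set g : ℝ → ℝ := fun y ↦ log (c + d * y) - (α + β * y)
  have hg : ConcaveOn ℝ (Icc u v) g := by
    refine ⟨convex_Icc u v, fun y hy z hz μ ν hμ hν hμν ↦ ?_⟩
    have hlog := strictConcaveOn_log_Ioi.concaveOn.2 (hpos y hy) (hpos z hz) hμ hν hμν
    have hL : μ • (c + d * y) + ν • (c + d * z) = c + d * (μ • y + ν • z) := by
      simp only [smul_eq_mul]; linear_combination c * hμν
    rw [hL] at hlog
    simp only [g, smul_eq_mul] at hlog ⊢
    linear_combination hlog - α * hμν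
  have huv : u ≤ v := hx.1.trans hx.2
  have := hg.ge_on_segment (left_mem_Icc.2 huv) (right_mem_Icc.2 huv)
    (by rwa [segment_eq_Icc huv])
  have := le_min (sub_nonneg.2 hu) (sub_nonneg.2 hv) |>.trans this
  simp only [g] at this
  linarith

lemma affine_le_log_norm_ofReal_sub {a t α β : ℝ} (ha : 0 < a) (ht : a < t)
    (h₁ : α + β * (-1) ≤ log (1 + t)) (h₂ : α + β * (a - 1) ≤ log (1 + t - a))
    (h₃ : α + β * (a / 2) ≤ log (1 + t ^ 2 - t * a) / 2) {z : ℂ} (hz₁ : ‖z‖ ≤ 1)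
    (hz₂ : 1 ≤ ‖z - a‖) : α + β * z.re ≤ log ‖(t : ℂ) - z‖ := by
  have hre₁ : -1 ≤ z.re := (abs_le.1 ((Complex.abs_re_le_norm z).trans hz₁)).1
  have hre₂ : z.re ≤ a / 2 := Complex.re_le_half_of_norm_le_one_le_norm_sub ha hz₁ hz₂
  rcases le_total z.re (a - 1) with hleft | hright
  · have hpos : ∀ y ∈ Icc (-1) (a - 1), 0 < t + -1 * y := fun y hy ↦ by linarith [hy.2]
    calc α + β * z.re ≤ log (t + -1 * z.re) :=
          affine_le_log_affine hpos (h₁.trans_eq (by ring_nf)) (h₂.trans_eq (by ring_nf))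
            ⟨hre₁, hleft⟩
      _ ≤ log ‖(t : ℂ) - z‖ := log_le_log (hpos _ ⟨hre₁, hleft⟩) (by
          simpa [sub_eq_add_neg] using Complex.re_le_norm ((t : ℂ) - z))
  · have hpos : ∀ y ∈ Icc (a - 1) (a / 2), 0 < (1 + t ^ 2 - a ^ 2) + (-2 * (t - a)) * y :=
      fun y hy ↦ by nlinarith [hy.2]
    have hconc := affine_le_log_affine (α := 2 * α) (β := 2 * β) hpos
      (by rw [(by ring : 1 + t ^ 2 - a ^ 2 + -2 * (t - a) * (a - 1) = (1 + t - a) ^ 2), log_pow]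
          push_cast
          linarith)
      (by rw [(by ring : 1 + t ^ 2 - a ^ 2 + -2 * (t - a) * (a / 2) = 1 + t ^ 2 - t * a)]
          linarith) ⟨hright, hre₂⟩
    have hnorm : log (1 + t ^ 2 - a ^ 2 + -2 * (t - a) * z.re) ≤ log (‖(t : ℂ) - z‖ ^ 2) :=
      log_le_log (hpos _ ⟨hright, hre₂⟩) (by linarith [Complex.le_sq_norm_ofReal_sub (t := t) hz₂])
    rw [log_pow] at hnorm
    push_cast at hnorm
    linarith

lemma exists_affine_le_three_points {x₁ x₂ x₃ c₁ c₂ c₃ s p q : ℝ} (h₁₂ : x₁ < x₂) (h₂₃ : x₂ < x₃)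
    (hp : p = (x₃ - s) / (x₃ - x₂)) (hq : q = (x₃ - s) / (x₃ - x₁)) :
    ∃ α β : ℝ, α + β * x₁ ≤ c₁ ∧ α + β * x₂ ≤ c₂ ∧ α + β * x₃ ≤ c₃ ∧
      min (p * c₂ + (1 - p) * c₃) (q * c₁ + (1 - q) * c₃) ≤ α + β * s := by
  have h₁₃ : x₁ < x₃ := h₁₂.trans h₂₃
  -- `hbelow`: the middle point lies on or below the chord joining the outer two.
  rcases le_or_gt ((x₃ - x₁) * c₂) ((x₃ - x₂) * c₁ + (x₂ - x₁) * c₃) with hbelow | habove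
  · set β := (c₃ - c₂) / (x₃ - x₂)
    have hβ : β * (x₃ - x₂) = c₃ - c₂ := div_mul_cancel₀ _ (sub_pos.2 h₂₃).ne'
    refine ⟨c₃ - β * x₃, β, ?_, by linarith, by linarith, min_le_left _ _ |>.trans_eq ?_⟩
    · nlinarith
    · have hp' : p * (x₃ - x₂) = x₃ - s := by rw [hp, div_mul_cancel₀ _ (sub_pos.2 h₂₃).ne']
      linear_combination -β * hp' + p * hβ
  · set β := (c₃ - c₁) / (x₃ - x₁)
    have hβ : β * (x₃ - x₁) = c₃ - c₁ := div_mul_cancel₀ _ (sub_pos.2 h₁₃).ne'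
    refine ⟨c₃ - β * x₃, β, by linarith, ?_, by linarith, min_le_right _ _ |>.trans_eq ?_⟩
    · nlinarith
    · have hq' : q * (x₃ - x₁) = x₃ - s := by rw [hq, div_mul_cancel₀ _ (sub_pos.2 h₁₃).ne']
      linear_combination -β * hq' + q * hβ

lemma pow_card_le_prod_of_affine_le_log {ι : Type*} [Fintype ι] {x y : ι → ℝ} {m s α β : ℝ}
    (hm : 0 < m) (hy : ∀ i, 0 < y i) (hxy : ∀ i, α + β * x i ≤ log (y i))
    (hx : ∑ i, x i = Fintype.card ι * s) (hms : log m ≤ α + β * s) :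
    m ^ Fintype.card ι ≤ ∏ i, y i := by
  rw [← log_le_log_iff (by positivity) (prod_pos fun i _ ↦ hy i), log_pow,
    log_prod fun i _ ↦ (hy i).ne']
  calc (Fintype.card ι : ℝ) * log m ≤ Fintype.card ι * (α + β * s) := by gcongr
    _ = ∑ i, (α + β * x i) := by
      rw [sum_add_distrib, ← mul_sum, hx, sum_const, card_univ, nsmul_eq_mul]; ring
    _ ≤ ∑ i, log (y i) := sum_le_sum fun i _ ↦ hxy i

theorem prod_abs_ge_min (n : ℕ) (hn : 2 ≤ n) (a : ℝ) (ha0 : 0 < a) (ha1 : a < 1)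
    (b : Fin (n - 1) → ℂ) (hb1 : ∀ k, ‖b k‖ ≤ 1)
    (hb2 : ∀ k, 1 ≤ ‖b k - (a : ℂ)‖)
    (s p q : ℝ)
    (hs : s = (1 / ((n : ℝ) - 1)) * (∑ k, b k).re)
    (hp : p = (a / 2 - s) / (1 - a / 2))
    (hq : q = (a / 2 - s) / (1 + a / 2))
    (b' : ℝ) (hb' : 1 < b')
    (B₁ B₂ : ℝ)
    (hB₁ : B₁ = (1 + b' - a) ^ p * (1 + b' ^ 2 - b' * a) ^ ((1 - p) / 2))
    (hB₂ : B₂ = (1 + b') ^ q * (1 + b' ^ 2 - b' * a) ^ ((1 - q) / 2)) :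
    (min B₁ B₂) ^ (n - 1) ≤ ∏ k, ‖(b' : ℂ) - b k‖ := by
  have hpos₁ : 0 < 1 + b' := by linarith
  have hpos₂ : 0 < 1 + b' - a := by linarith
  have hpos₃ : 0 < 1 + b' ^ 2 - b' * a := by nlinarith
  have hlogB₁ : log B₁ = p * log (1 + b' - a) + (1 - p) * (log (1 + b' ^ 2 - b' * a) / 2) := by
    rw [hB₁, log_rpow_mul_rpow hpos₂ hpos₃]; ring
  have hlogB₂ : log B₂ = q * log (1 + b') + (1 - q) * (log (1 + b' ^ 2 - b' * a) / 2) := by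
    rw [hB₂, log_rpow_mul_rpow hpos₁ hpos₃]; ring
  obtain ⟨α, β, h₁, h₂, h₃, hs'⟩ := exists_affine_le_three_points (x₁ := -1) (x₂ := a - 1)
    (x₃ := a / 2) (c₁ := log (1 + b')) (c₂ := log (1 + b' - a))
    (c₃ := log (1 + b' ^ 2 - b' * a) / 2) (s := s) (by linarith) (by linarith)
    (hp.trans (by congr 1; ring)) (hq.trans (by congr 1; ring))
  have hmin : 0 < min B₁ B₂ := by rw [hB₁, hB₂]; positivity
  have hlog_min : log (min B₁ B₂) ≤ α + β * s := by
    rw [← hlogB₁, ← hlogB₂] at hs'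
    exact le_min (log_le_log hmin (min_le_left _ _)) (log_le_log hmin (min_le_right _ _))
      |>.trans hs'
  have hmean : ∑ k, (b k).re = Fintype.card (Fin (n - 1)) * s := by
    have hn' : (1 : ℝ) < n := by exact_mod_cast hn
    rw [Fintype.card_fin, Nat.cast_sub (by omega), Nat.cast_one, hs, ← Complex.re_sum,
      ← mul_assoc, mul_one_div_cancel (by linarith), one_mul]
  simpa only [Fintype.card_fin] using pow_card_le_prod_of_affine_le_log hmin
    (fun k ↦ Complex.norm_ofReal_sub_pos ((hb1 k).trans_lt hb'))
    (fun k ↦ affine_le_log_norm_ofReal_sub ha0 (by linarith) h₁ h₂ h₃ (hb1 k) (hb2 k)) hmean hlog_min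
end

section
/- Let c and r be real numbers with 0 < c < 1 and 0 < r < 1 − c. Let a_1, ..., a_n be complex numbers with 0 < |a_k| ≤ 1 and |(c − a_k)/(1 − c·a_k)| ≥ r for all k. Then ∏_{k=1}^n |(c − a_k)/(1 − c·a_k)| ≥ r^β, where β = log(∏_{k=1}^n |a_k|) / log((c + r)/(1 + cr)). -/
/-!
Let `m x = (x - c) / (1 - c x)` and `s = (c + r) / (1 + c r)`, so that `m s = r`. As `r ^ β` is the
product of the `r ^ (log |a_k| / log s)`, it suffices to bound each factor by
`|(c - a_k) / (1 - c a_k)|`. If `|a_k| ≤ s` the exponent is at least `1`, so the factor is at most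
`r`. If `|a_k| ≥ s`, concavity of `u ↦ log (m (exp u))` on `(log c, 0]`, where it vanishes at `0`,
gives `r ^ (log x / log s) ≤ m x` for `s ≤ x ≤ 1`, and `m |z| ≤ |(c - z) / (1 - c z)|` on the
closed unit disc.
-/

open Finset Real

theorem Complex.normSq_one_sub_ofReal_mul_sub_normSq_ofReal_sub (c : ℝ) (z : ℂ) :
    Complex.normSq (1 - c * z) - Complex.normSq (c - z) = (1 - c ^ 2) * (1 - Complex.normSq z) := by
  simp only [Complex.normSq_apply, Complex.sub_re, Complex.sub_im, Complex.mul_re, Complex.mul_im,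
    Complex.one_re, Complex.one_im, Complex.ofReal_re, Complex.ofReal_im]
  ring

theorem sub_div_one_sub_mul_norm_le_norm_moebius {c : ℝ} (hc0 : 0 ≤ c) (hc1 : c < 1) {z : ℂ}
    (hz : ‖z‖ ≤ 1) : (‖z‖ - c) / (1 - c * ‖z‖) ≤ ‖(c - z) / (1 - c * z)‖ := by
  set x := ‖z‖
  set A := ‖1 - (c : ℂ) * z‖
  set B := ‖(c : ℂ) - z‖
  have hcx : 0 < 1 - c * x := by nlinarith
  rcases le_or_gt x c with hxc | hxc
  · exact (div_nonpos_of_nonpos_of_nonneg (by linarith) hcx.le).trans (norm_nonneg _)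
  have hA : 1 - c * x ≤ A := by
    simpa [x, A, abs_of_nonneg hc0] using norm_sub_norm_le (1 : ℂ) (c * z)
  have hBA : B ^ 2 = A ^ 2 - (1 - c ^ 2) * (1 - x ^ 2) := by
    simp only [B, A, x, Complex.sq_norm]
    linarith [Complex.normSq_one_sub_ofReal_mul_sub_normSq_ofReal_sub c z]
  -- `B²(1 - cx)² - (x - c)²A² = (1 - c²)(1 - x²)(A² - (1 - cx)²)`
  have hsq : ((x - c) * A) ^ 2 ≤ (B * (1 - c * x)) ^ 2 := by
    have : 0 ≤ (1 - c ^ 2) * (1 - x ^ 2) * (A ^ 2 - (1 - c * x) ^ 2) := by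
      have := norm_nonneg z
      apply mul_nonneg (mul_nonneg _ _) _ <;> nlinarith
    nlinarith
  rw [norm_div, div_le_div_iff₀ hcx (hcx.trans_le hA)]
  exact (pow_le_pow_iff_left₀ (by nlinarith) (by positivity) two_ne_zero).mp hsq

theorem concaveOn_log_exp_sub_sub_log_one_sub_mul_exp {c : ℝ} (hc : 0 < c) :
    ConcaveOn ℝ (Set.Ioc (log c) 0) fun u => log (exp u - c) - log (1 - c * exp u) := by
  have bounds : ∀ u ∈ Set.Ioc (log c) 0, 0 < exp u - c ∧ exp u - c ≤ 1 - c * exp u := by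
    rintro u ⟨hcu, hu0⟩
    have h1 := (log_lt_iff_lt_exp hc).1 hcu
    have h2 := exp_le_one_iff.2 hu0
    constructor <;> nlinarith
  have deriv_sub_c (u : ℝ) : HasDerivAt (fun u => exp u - c) (exp u) u :=
    (hasDerivAt_exp u).sub_const c
  have deriv_one_sub (u : ℝ) : HasDerivAt (fun u => 1 - c * exp u) (-(c * exp u)) u :=
    ((hasDerivAt_exp u).const_mul c).const_sub 1
  refine concaveOn_of_hasDerivWithinAt2_nonpos (convex_Ioc _ _)
    (f' := fun u => exp u / (exp u - c) + c * exp u / (1 - c * exp u))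
    (f'' := fun u => c * exp u * (1 / (1 - c * exp u) ^ 2 - 1 / (exp u - c) ^ 2)) ?_ ?_ ?_ ?_
  · refine ContinuousOn.sub (ContinuousOn.log (by fun_prop) fun u hu => (bounds u hu).1.ne')
      (ContinuousOn.log (by fun_prop) fun u hu => ?_)
    linarith [bounds u hu]
  all_goals
    rw [interior_Ioc]
    intro u hu
    obtain ⟨hpos, hle⟩ := bounds u (Set.Ioo_subset_Ioc_self hu)
    have hne : 1 - c * exp u ≠ 0 := by linarith
  · exact (((deriv_sub_c u).log hpos.ne').sub ((deriv_one_sub u).log hne)).hasDerivWithinAt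
      |>.congr_deriv (by ring)
  · exact (((hasDerivAt_exp u).div (deriv_sub_c u) hpos.ne').add
      (((hasDerivAt_exp u).const_mul c).div (deriv_one_sub u) hne)).hasDerivWithinAt
      |>.congr_deriv (by field_simp; ring)
  · refine mul_nonpos_of_nonneg_of_nonpos (by positivity) (sub_nonpos.2 ?_)
    exact one_div_le_one_div_of_le (by positivity) (pow_le_pow_left₀ hpos.le hle 2)

theorem moebius_rpow_log_div_log_le_moebius {c s x : ℝ} (hc : 0 < c) (hcs : c < s) (hs1 : s < 1)
    (hsx : s ≤ x) (hx1 : x ≤ 1) :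
    ((s - c) / (1 - c * s)) ^ (log x / log s) ≤ (x - c) / (1 - c * x) := by
  set f : ℝ → ℝ := fun u => log (exp u - c) - log (1 - c * exp u)
  have hs0 : 0 < s := hc.trans hcs
  have hx0 : 0 < x := hs0.trans_le hsx
  have hlogs : log s < 0 := log_neg hs0 hs1
  have moebius_pos {y : ℝ} (hcy : c < y) (hy1 : y ≤ 1) : 0 < (y - c) / (1 - c * y) :=
    div_pos (by linarith) (by nlinarith)
  have f_log {y : ℝ} (hcy : c < y) (hy1 : y ≤ 1) : f (log y) = log ((y - c) / (1 - c * y)) := by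
    simp only [f, exp_log (hc.trans hcy)]
    rw [log_div (by linarith) (by nlinarith)]
  set t := log x / log s
  have ht0 : 0 ≤ t := div_nonneg_of_nonpos (log_nonpos hx0.le hx1) hlogs.le
  have ht1 : t ≤ 1 := (div_le_one_of_neg hlogs).2 (log_le_log hs0 hsx)
  have hconc : t • f (log s) + (1 - t) • f 0 ≤ f (t • log s + (1 - t) • 0) :=
    (concaveOn_log_exp_sub_sub_log_one_sub_mul_exp hc).2 ⟨log_lt_log hc hcs, hlogs.le⟩
      ⟨log_neg hc (hcs.trans hs1), le_rfl⟩ ht0 (sub_nonneg.2 ht1) (add_sub_cancel t 1)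
  have hcomb : t • log s + (1 - t) • (0 : ℝ) = log x := by
    simp only [smul_eq_mul, mul_zero, add_zero, t, div_mul_cancel₀ _ hlogs.ne]
  have hf0 : f 0 = 0 := by simp [f]
  rw [hcomb, f_log hcs hs1.le, f_log (hcs.trans_le hsx) hx1, hf0, smul_zero, add_zero,
    smul_eq_mul] at hconc
  calc ((s - c) / (1 - c * s)) ^ t = exp (t * log ((s - c) / (1 - c * s))) := by
        rw [rpow_def_of_pos (moebius_pos hcs hs1.le), mul_comm]
    _ ≤ exp (log ((x - c) / (1 - c * x))) := exp_le_exp.2 hconc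
    _ = (x - c) / (1 - c * x) := exp_log (moebius_pos (hcs.trans_le hsx) hx1)

theorem moebius_add_div_one_add_mul {c r : ℝ} (hcr : 1 + c * r ≠ 0) (hc : c ^ 2 ≠ 1) :
    ((c + r) / (1 + c * r) - c) / (1 - c * ((c + r) / (1 + c * r))) = r := by
  have hc' : 1 - c ^ 2 ≠ 0 := sub_ne_zero.2 hc.symm
  have hnum : (c + r) / (1 + c * r) - c = r * (1 - c ^ 2) / (1 + c * r) := by field_simp; ring
  have hden : 1 - c * ((c + r) / (1 + c * r)) = (1 - c ^ 2) / (1 + c * r) := by field_simp; ring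
  rw [hnum, hden, div_div_div_cancel_right₀ hcr, mul_div_cancel_right₀ r hc']

theorem rpow_log_norm_div_log_le_norm_moebius {c r : ℝ} (hc0 : 0 < c) (hc1 : c < 1) (hr0 : 0 < r)
    (hr1 : r < 1) {z : ℂ} (hz0 : 0 < ‖z‖) (hz1 : ‖z‖ ≤ 1)
    (hzr : r ≤ ‖(c - z) / (1 - c * z)‖) :
    r ^ (log ‖z‖ / log ((c + r) / (1 + c * r))) ≤ ‖(c - z) / (1 - c * z)‖ := by
  set s := (c + r) / (1 + c * r)
  have hden : 0 < 1 + c * r := by positivity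
  have hcs : c < s := by
    rw [lt_div_iff₀ hden]
    nlinarith [mul_pos hr0 (show 0 < 1 - c ^ 2 by nlinarith)]
  have hs1 : s < 1 := by
    rw [div_lt_one hden]
    nlinarith
  rcases le_or_gt ‖z‖ s with hzs | hsz
  · have hexp : 1 ≤ log ‖z‖ / log s :=
      (one_le_div_of_neg (log_neg (hc0.trans hcs) hs1)).2 (log_le_log hz0 hzs)
    calc r ^ (log ‖z‖ / log s) ≤ r ^ (1 : ℝ) := rpow_le_rpow_of_exponent_ge hr0 hr1.le hexp
      _ = r := rpow_one r
      _ ≤ _ := hzr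
  · calc r ^ (log ‖z‖ / log s) = ((s - c) / (1 - c * s)) ^ (log ‖z‖ / log s) := by
          rw [moebius_add_div_one_add_mul hden.ne' (by nlinarith)]
      _ ≤ (‖z‖ - c) / (1 - c * ‖z‖) :=
          moebius_rpow_log_div_log_le_moebius hc0 hcs hs1 hsz.le hz1
      _ ≤ _ := sub_div_one_sub_mul_norm_le_norm_moebius hc0.le hc1 hz1

theorem prod_moebius_abs_ge (n : ℕ) (c r : ℝ) (hc0 : 0 < c) (hc1 : c < 1)
    (hr0 : 0 < r) (hr1 : r < 1 - c)
    (a : Fin n → ℂ) (ha0 : ∀ k, 0 < ‖a k‖) (ha1 : ∀ k, ‖a k‖ ≤ 1)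
    (har : ∀ k, r ≤ ‖((c : ℂ) - a k) / (1 - (c : ℂ) * a k)‖)
    (β : ℝ)
    (hβ : β = Real.log (∏ k, ‖a k‖) / Real.log ((c + r) / (1 + c * r))) :
    r ^ β ≤ ∏ k, ‖((c : ℂ) - a k) / (1 - (c : ℂ) * a k)‖ := by
  rw [hβ, log_prod fun k _ => (ha0 k).ne', sum_div, rpow_sum_of_pos hr0]
  exact prod_le_prod (fun k _ => by positivity) fun k _ =>
    rpow_log_norm_div_log_le_norm_moebius hc0 hc1 hr0 (by linarith) (ha0 k) (ha1 k) (har k)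
end

section
/- Let a ∈ (0,1) and let P(z) = (z − a)·∏_{k=1}^{n−1}(z − z_k) be a monic complex polynomial of degree n ≥ 2 with all zeros in the closed unit disk, and write P'(z) = n·∏_{k=1}^{n−1}(z − ζ_k) for its critical points ζ_k. Then for every real b > 1, (b − a)·∏_{k=1}^{n−1} |b − z_k| ≥ (b − 1)·∏_{k=1}^{n−1} |b − ζ_k|. -/
/-!
Write `P = ∏ᵢ (X - rᵢ)` with `r = (a, z₁, …, zₙ₋₁)`. Then `P'(b) = ∑ᵢ ∏_{j ≠ i} (b - rⱼ)`, and every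
factor satisfies `|b - rᵢ| ≥ b - 1` because `|rᵢ| ≤ 1`. Hence each of the `n` summands is at most
`|P(b)| / (b - 1)`, so `(b - 1) |P'(b)| ≤ n |P(b)|`; dividing by `n` gives the inequality, as
`|P'(b)| = n ∏ₖ |b - ζₖ|` and `|P(b)| = (b - a) ∏ₖ |b - zₖ|`.
-/

open Polynomial Finset

theorem Polynomial.mul_norm_eval_derivative_prod_X_sub_C_le {𝕜 ι : Type*} [NormedField 𝕜]
    (s : Finset ι) (r : ι → 𝕜) (x : 𝕜) {d : ℝ} (hd : ∀ i ∈ s, d ≤ ‖x - r i‖) :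
    d * ‖(derivative (∏ i ∈ s, (X - C (r i)))).eval x‖ ≤ #s * ∏ i ∈ s, ‖x - r i‖ := by
  classical
  rcases le_or_gt d 0 with hd0 | hd0
  · exact (mul_nonpos_of_nonpos_of_nonneg hd0 (norm_nonneg _)).trans (by positivity)
  have hterm : ∀ i ∈ s, d * ‖∏ j ∈ s.erase i, (x - r j)‖ ≤ ∏ j ∈ s, ‖x - r j‖ := fun i hi => by
    rw [norm_prod, ← mul_prod_erase s _ hi]
    exact mul_le_mul_of_nonneg_right (hd i hi) (prod_nonneg fun j _ => norm_nonneg _)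
  calc d * ‖(derivative (∏ i ∈ s, (X - C (r i)))).eval x‖
      = d * ‖∑ i ∈ s, ∏ j ∈ s.erase i, (x - r j)‖ := by
        simp [derivative_prod_finset, eval_finsetSum, eval_prod]
    _ ≤ ∑ i ∈ s, d * ‖∏ j ∈ s.erase i, (x - r j)‖ := by
        rw [← mul_sum]
        exact mul_le_mul_of_nonneg_left (norm_sum_le _ _) hd0.le
    _ ≤ ∑ _i ∈ s, ∏ j ∈ s, ‖x - r j‖ := sum_le_sum hterm
    _ = #s * ∏ i ∈ s, ‖x - r i‖ := by rw [sum_const, nsmul_eq_mul]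

theorem Polynomial.norm_sub_one_mul_prod_norm_sub_critical_le {𝕜 ι κ : Type*} [RCLike 𝕜]
    [Fintype ι] [Nonempty ι] [Fintype κ] (r : ι → 𝕜) (ζ : κ → 𝕜)
    (hr : ∀ i, ‖r i‖ ≤ 1)
    (hζ : derivative (∏ i, (X - C (r i))) = C (Fintype.card ι : 𝕜) * ∏ k, (X - C (ζ k)))
    (x : 𝕜) :
    (‖x‖ - 1) * ∏ k, ‖x - ζ k‖ ≤ ∏ i, ‖x - r i‖ := by
  have hbound := mul_norm_eval_derivative_prod_X_sub_C_le univ r x (d := ‖x‖ - 1)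
    fun i _ => by linarith [norm_sub_norm_le x (r i), hr i]
  have hcard : (0 : ℝ) < Fintype.card ι := by exact_mod_cast Fintype.card_pos
  rw [hζ, eval_mul, eval_C, eval_prod, norm_mul, norm_prod, RCLike.norm_natCast, card_univ] at hbound
  simp only [eval_sub, eval_X, eval_C] at hbound
  rw [mul_left_comm] at hbound
  exact le_of_mul_le_mul_left hbound hcard

theorem prod_zeros_ge_prod_critical (n : ℕ) (hn : 2 ≤ n) (a : ℝ) (ha0 : 0 < a) (ha1 : a < 1)
    (z ζ : Fin (n - 1) → ℂ) (P : Polynomial ℂ)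
    (hP : P = (Polynomial.X - Polynomial.C (a : ℂ)) * ∏ k, (Polynomial.X - Polynomial.C (z k)))
    (hz : ∀ k, ‖z k‖ ≤ 1)
    (hP' : Polynomial.derivative P = Polynomial.C (n : ℂ) * ∏ k, (Polynomial.X - Polynomial.C (ζ k)))
    (b : ℝ) (hb : 1 < b) :
    (b - 1) * ∏ k, ‖(b : ℂ) - ζ k‖ ≤ (b - a) * ∏ k, ‖(b : ℂ) - z k‖ := by
  let r : Option (Fin (n - 1)) → ℂ := fun o => o.elim (a : ℂ) z
  have hr : ∀ i, ‖r i‖ ≤ 1 := by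
    rintro (_ | k)
    · simpa [r, abs_of_pos ha0] using ha1.le
    · exact hz k
  have hPr : P = ∏ i, (X - C (r i)) := by rw [hP, Fintype.prod_option]; rfl
  have hcard : Fintype.card (Option (Fin (n - 1))) = n := by rw [Fintype.card_option, Fintype.card_fin]; omega
  have key : (‖(b : ℂ)‖ - 1) * ∏ k, ‖(b : ℂ) - ζ k‖ ≤ ‖(b : ℂ) - a‖ * ∏ k, ‖(b : ℂ) - z k‖ := by
    have h := norm_sub_one_mul_prod_norm_sub_critical_le r ζ hr (by rw [← hPr, hP', hcard]) (b : ℂ)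
    rwa [Fintype.prod_option] at h
  rwa [← Complex.ofReal_sub, Complex.norm_real, Complex.norm_real, Real.norm_of_nonneg (by linarith),
    Real.norm_of_nonneg (by linarith)] at key
end
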